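/- arXiv:2410.23774 — 11 statements merged into one kernel-verified Lean document; each statement's English description precedes it below -/
import Mathlib

section
/- Let g(a,r,t) = (1/2)(νr − μt) + (1/(2ℓ))·Σ_{i=1}^m max(‖x_i − a‖² − r, 0) + (b/(2ℓ))·Σ_{i=m+1}^ℓ max(r + t − ‖x_i − a‖², 0). If μ > bn/ℓ where n = ℓ − m, then g is unbounded below on the set {(a,r,t) : r ≥ 0, t ≥ 0}; in particular g(0,0,t) → −∞ as t → +∞. -/
/-! At `a = 0`, `r = 0`, once `t` exceeds every `‖x i‖²` each negative hinge term equals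
`t - ‖x i‖²`, so `g 0 0 t` is eventually affine in `t` with slope `(b n / ℓ - μ) / 2 < 0`. -/

open Finset Filter

theorem Fin.card_filter_le_val {n : ℕ} (m : ℕ) : #{i : Fin n | m ≤ (i : ℕ)} = n - m := by
  have hsplit :=
    card_filter_add_card_filter_not (s := (univ : Finset (Fin n))) (fun i => (i : ℕ) < m)
  simp only [not_lt, Fin.card_filter_val_lt, card_univ, Fintype.card_fin] at hsplit
  omega

theorem eventually_sum_max_sub_eq {ι : Type*} (s : Finset ι) (c : ι → ℝ) :
    ∀ᶠ t in atTop, ∑ i ∈ s, max (t - c i) 0 = #s * t - ∑ i ∈ s, c i := by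
  filter_upwards [(eventually_all_finset s).2 fun i _ => eventually_ge_atTop (c i)] with t ht
  rw [sum_congr rfl fun i hi => max_eq_left (sub_nonneg.2 (ht i hi)), sum_sub_distrib, sum_const,
    nsmul_eq_mul]

theorem stmt1_general
    {F : Type*} [NormedAddCommGroup F] [InnerProductSpace ℝ F]
    (l m : ℕ) (hml : m ≤ l)
    (x : Fin l → F) (ν μ b : ℝ)
    (g : F → ℝ → ℝ → ℝ)
    (hg : ∀ a r t, g a r t =
      (1/2) * (ν * r - μ * t)
      + (1/(2*(l:ℝ))) * ∑ i ∈ univ.filter (fun i : Fin l => (i : ℕ) < m),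
          max (‖x i - a‖^2 - r) 0
      + (b/(2*(l:ℝ))) * ∑ i ∈ univ.filter (fun i : Fin l => m ≤ (i : ℕ)),
          max (r + t - ‖x i - a‖^2) 0)
    (hμ : b * ((l : ℝ) - (m : ℝ)) / (l : ℝ) < μ) :
    (∀ M : ℝ, ∃ a : F, ∃ r t : ℝ, 0 ≤ r ∧ 0 ≤ t ∧ g a r t < M) ∧
    Tendsto (fun t : ℝ => g 0 0 t) atTop atBot := by
  set pos := univ.filter (fun i : Fin l => (i : ℕ) < m)
  set neg := univ.filter (fun i : Fin l => m ≤ (i : ℕ))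
  have hcard : (#neg : ℝ) = l - m := by rw [Fin.card_filter_le_val, Nat.cast_sub hml]
  have hslope : (b * ((l : ℝ) - m) / l - μ) / 2 < 0 := by linarith
  have hline := tendsto_atBot_add_const_left _
    ((1/(2*(l:ℝ))) * ∑ i ∈ pos, ‖x i‖^2 - (b/(2*(l:ℝ))) * ∑ i ∈ neg, ‖x i‖^2)
    (tendsto_id.const_mul_atTop_of_neg hslope)
  have hg0 : Tendsto (fun t => g 0 0 t) atTop atBot := by
    refine hline.congr' ?_
    filter_upwards [eventually_sum_max_sub_eq neg fun i => ‖x i‖^2] with t ht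
    simp only [hg, sub_zero, zero_add, max_eq_left (sq_nonneg _), ht, hcard, id]
    ring
  refine ⟨fun M => ?_, hg0⟩
  obtain ⟨t, hgt, ht⟩ :=
    ((hg0.eventually (eventually_lt_atBot M)).and (eventually_ge_atTop 0)).exists
  exact ⟨0, 0, t, le_rfl, ht, hgt⟩

theorem stmt1
    {F : Type*} [NormedAddCommGroup F] [InnerProductSpace ℝ F]
    (l m : ℕ) (hm : 1 ≤ m) (hml : m ≤ l) (hn : 1 ≤ l - m)
    (x : Fin l → F) (ν μ b : ℝ) (hν : 0 < ν) (hμ0 : 0 ≤ μ) (hb : 1 ≤ b)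
    (g : F → ℝ → ℝ → ℝ)
    (hg : ∀ a r t, g a r t =
      (1/2) * (ν * r - μ * t)
      + (1/(2*(l:ℝ))) * ∑ i ∈ univ.filter (fun i : Fin l => (i : ℕ) < m),
          max (‖x i - a‖^2 - r) 0
      + (b/(2*(l:ℝ))) * ∑ i ∈ univ.filter (fun i : Fin l => m ≤ (i : ℕ)),
          max (r + t - ‖x i - a‖^2) 0)
    (hμ : b * ((l : ℝ) - (m : ℝ)) / (l : ℝ) < μ) :
    (∀ M : ℝ, ∃ a : F, ∃ r t : ℝ, 0 ≤ r ∧ 0 ≤ t ∧ g a r t < M) ∧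
    Tendsto (fun t : ℝ => g 0 0 t) atTop atBot :=
  stmt1_general l m hml x ν μ b g hg hμ
end

section
/- Suppose ν + μ < m/ℓ. If (a*, r*, t*) is a global minimizer of g over {(a,r,t) : a ∈ F, r ∈ ℝ, t ≥ 0} (i.e., with r unconstrained in sign), then r* ≥ 0. -/
open Finset

lemma stmt2_aux (l ν μ rStar tStar t' A B b mR : ℝ) (hl : 0 < l)
    (key : 1/2*(ν*rStar - μ*tStar) + 1/(2*l)*A + b/(2*l)*B ≤
      1/2*(ν*0 - μ*t') + 1/(2*l)*(A + mR*rStar) + b/(2*l)*B) :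
    ν * rStar * l - μ * tStar * l + μ * t' * l ≤ mR * rStar := by
  have h2l : l ≠ 0 := ne_of_gt hl
  have key2 : 1/2*(ν*rStar - μ*tStar) + 1/(2*l)*A ≤
      1/2*(ν*0 - μ*t') + 1/(2*l)*(A + mR*rStar) := by linarith
  field_simp at key2
  nlinarith [key2, hl]

theorem stmt2
    {F : Type*} [NormedAddCommGroup F] [InnerProductSpace ℝ F]
    (l m : ℕ) (hm : 1 ≤ m) (hml : m ≤ l)
    (x : Fin l → F) (ν μ b : ℝ) (hν : 0 < ν) (hμ0 : 0 ≤ μ) (hb : 1 ≤ b)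
    (hνμ : ν + μ < (m : ℝ) / (l : ℝ))
    (g : F → ℝ → ℝ → ℝ)
    (hg : ∀ a r t, g a r t =
      (1/2) * (ν * r - μ * t)
      + (1/(2*(l:ℝ))) * ∑ i ∈ univ.filter (fun i : Fin l => (i : ℕ) < m),
          max (‖x i - a‖^2 - r) 0
      + (b/(2*(l:ℝ))) * ∑ i ∈ univ.filter (fun i : Fin l => m ≤ (i : ℕ)),
          max (r + t - ‖x i - a‖^2) 0)
    (aStar : F) (rStar tStar : ℝ) (htStar : 0 ≤ tStar)
    (hmin : ∀ (a : F) (r t : ℝ), 0 ≤ t → g aStar rStar tStar ≤ g a r t) :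
    0 ≤ rStar := by
  by_contra hcon
  push_neg at hcon
  have hl : (0:ℝ) < (l:ℝ) := by
    have : 0 < l := lt_of_lt_of_le hm hml
    exact_mod_cast this
  set t' : ℝ := max (tStar + rStar) 0 with ht'def
  have ht' : 0 ≤ t' := le_max_right _ _
  have key := hmin aStar 0 t' ht'
  rw [hg, hg] at key
  -- cardinality of the positive-example index set
  have hcard : (univ.filter (fun i : Fin l => (i:ℕ) < m)).card = m := by
    have : (univ.filter (fun i : Fin l => (i:ℕ) < m)) = Finset.map (Fin.castLEEmb hml) univ := by
      ext i
      simp only [mem_filter, mem_univ, true_and, Finset.mem_map, Fin.castLEEmb,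
        Function.Embedding.coeFn_mk]
      constructor
      · intro h; exact ⟨⟨i, h⟩, rfl⟩
      · rintro ⟨j, rfl⟩; exact j.isLt
    rw [this, Finset.card_map, Finset.card_univ, Fintype.card_fin]
  -- first sum at r = 0 equals first sum at rStar plus m * rStar
  have hS1 : (∑ i ∈ univ.filter (fun i : Fin l => (i:ℕ) < m),
        max (‖x i - aStar‖^2 - (0:ℝ)) 0)
      = (∑ i ∈ univ.filter (fun i : Fin l => (i:ℕ) < m),
        max (‖x i - aStar‖^2 - rStar) 0) + (m:ℝ) * rStar := by
    have e1 : ∀ i ∈ univ.filter (fun i : Fin l => (i:ℕ) < m),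
        max (‖x i - aStar‖^2 - (0:ℝ)) 0 = ‖x i - aStar‖^2 := by
      intro i _
      rw [sub_zero]
      exact max_eq_left (by positivity)
    have e2 : ∀ i ∈ univ.filter (fun i : Fin l => (i:ℕ) < m),
        max (‖x i - aStar‖^2 - rStar) 0 = ‖x i - aStar‖^2 - rStar := by
      intro i _
      refine max_eq_left ?_
      have : (0:ℝ) ≤ ‖x i - aStar‖^2 := by positivity
      linarith
    rw [Finset.sum_congr rfl e1, Finset.sum_congr rfl e2, Finset.sum_sub_distrib,
      Finset.sum_const, hcard, nsmul_eq_mul]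
    ring
  -- second sums are equal
  have hS2 : (∑ i ∈ univ.filter (fun i : Fin l => m ≤ (i:ℕ)),
        max ((0:ℝ) + t' - ‖x i - aStar‖^2) 0)
      = (∑ i ∈ univ.filter (fun i : Fin l => m ≤ (i:ℕ)),
        max (rStar + tStar - ‖x i - aStar‖^2) 0) := by
    refine Finset.sum_congr rfl ?_
    intro i _
    have hd : (0:ℝ) ≤ ‖x i - aStar‖^2 := by positivity
    rcases le_or_gt 0 (tStar + rStar) with h | h
    · have : t' = tStar + rStar := max_eq_left h
      rw [this]; ring_nf
    · have ht0 : t' = 0 := max_eq_right h.le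
      rw [ht0]
      have h1 : max ((0:ℝ) + 0 - ‖x i - aStar‖^2) 0 = 0 := max_eq_right (by linarith)
      have h2 : max (rStar + tStar - ‖x i - aStar‖^2) 0 = 0 := max_eq_right (by linarith)
      rw [h1, h2]
  rw [hS1, hS2] at key
  have key3 := stmt2_aux (l:ℝ) ν μ rStar tStar t' _ _ b (m:ℝ) hl key
  -- key3 : ν*rStar*l - μ*tStar*l + μ*t'*l ≤ m*rStar
  have hmul : (ν + μ) * (l:ℝ) < (m:ℝ) := (lt_div_iff₀ hl).mp hνμ
  have htineq : rStar ≤ t' - tStar := by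
    have : tStar + rStar ≤ t' := le_max_left _ _
    linarith
  have hμt : μ * rStar ≤ μ * (t' - tStar) := mul_le_mul_of_nonneg_left htineq hμ0
  nlinarith [key3, mul_pos (sub_pos.mpr hmul) (neg_pos.mpr hcon),
    mul_le_mul_of_nonneg_right hμt hl.le]
end

section
/- Suppose ν + μ < m/ℓ. Every global minimizer of g over {a ∈ F, r ∈ ℝ, t ≥ 0} is also a global minimizer of g over {a ∈ F, r ≥ 0, t ≥ 0}, and conversely every global minimizer of g over {a ∈ F, r ≥ 0, t ≥ 0} is a global minimizer over {a ∈ F, r ∈ ℝ, t ≥ 0}. -/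
open Finset

theorem stmt3
    {F : Type*} [NormedAddCommGroup F] [InnerProductSpace ℝ F]
    (l m : ℕ) (hm : 1 ≤ m) (hml : m ≤ l)
    (x : Fin l → F) (ν μ b : ℝ) (hν : 0 < ν) (hμ0 : 0 ≤ μ) (hb : 1 ≤ b)
    (hνμ : ν + μ < (m : ℝ) / (l : ℝ))
    (g : F → ℝ → ℝ → ℝ)
    (hg : ∀ a r t, g a r t =
      (1/2) * (ν * r - μ * t)
      + (1/(2*(l:ℝ))) * ∑ i ∈ univ.filter (fun i : Fin l => (i : ℕ) < m),
          max (‖x i - a‖^2 - r) 0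
      + (b/(2*(l:ℝ))) * ∑ i ∈ univ.filter (fun i : Fin l => m ≤ (i : ℕ)),
          max (r + t - ‖x i - a‖^2) 0)
    (hex : ∃ (a0 : F) (r0 t0 : ℝ), 0 ≤ t0 ∧
      ∀ (a : F) (r t : ℝ), 0 ≤ t → g a0 r0 t0 ≤ g a r t) :
    (∀ (a0 : F) (r0 t0 : ℝ), 0 ≤ t0 →
      (∀ (a : F) (r t : ℝ), 0 ≤ t → g a0 r0 t0 ≤ g a r t) →
      (0 ≤ r0 ∧ ∀ (a : F) (r t : ℝ), 0 ≤ r → 0 ≤ t → g a0 r0 t0 ≤ g a r t)) ∧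
    (∀ (a0 : F) (r0 t0 : ℝ), 0 ≤ r0 → 0 ≤ t0 →
      (∀ (a : F) (r t : ℝ), 0 ≤ r → 0 ≤ t → g a0 r0 t0 ≤ g a r t) →
      (∀ (a : F) (r t : ℝ), 0 ≤ t → g a0 r0 t0 ≤ g a r t)) := by
  have hl0 : (0:ℝ) < (l:ℝ) := by
    have h1 : 1 ≤ l := le_trans hm hml
    exact_mod_cast Nat.lt_of_lt_of_le Nat.zero_lt_one h1
  have hmul : (ν + μ) * (l:ℝ) < (m:ℝ) := (lt_div_iff₀ hl0).mp hνμ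
  have hcard : (univ.filter (fun i : Fin l => (i : ℕ) < m)).card = m := by
    have himg : (univ.filter (fun i : Fin l => (i : ℕ) < m)).image
        (fun i : Fin l => (i : ℕ)) = Finset.range m := by
      ext j
      simp only [Finset.mem_image, Finset.mem_filter, Finset.mem_univ, true_and,
        Finset.mem_range]
      constructor
      · rintro ⟨i, hi, rfl⟩; exact hi
      · intro hj; exact ⟨⟨j, lt_of_lt_of_le hj hml⟩, hj, rfl⟩
    rw [← Finset.card_image_of_injective
      (univ.filter (fun i : Fin l => (i : ℕ) < m)) Fin.val_injective, himg,
      Finset.card_range]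
  -- key decrease lemma
  have key : ∀ (a : F) (r t : ℝ), r < 0 → 0 ≤ t →
      g a 0 (max (t + r) 0) < g a r t := by
    intro a r t hr ht
    rw [hg, hg]
    have hS1 : ∑ i ∈ univ.filter (fun i : Fin l => (i : ℕ) < m),
          max (‖x i - a‖^2 - 0) 0
        = (∑ i ∈ univ.filter (fun i : Fin l => (i : ℕ) < m),
            max (‖x i - a‖^2 - r) 0) + (m:ℝ) * r := by
      have hterm : ∀ i ∈ univ.filter (fun i : Fin l => (i : ℕ) < m),
          max (‖x i - a‖^2 - 0) 0 = max (‖x i - a‖^2 - r) 0 + r := by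
        intro i _
        have hd : (0:ℝ) ≤ ‖x i - a‖^2 := by positivity
        rw [max_eq_left (by linarith), max_eq_left (by linarith)]
        ring
      rw [Finset.sum_congr rfl hterm, Finset.sum_add_distrib, Finset.sum_const, hcard,
        nsmul_eq_mul]
    have hS2 : ∑ i ∈ univ.filter (fun i : Fin l => m ≤ (i : ℕ)),
          max (0 + max (t + r) 0 - ‖x i - a‖^2) 0
        = ∑ i ∈ univ.filter (fun i : Fin l => m ≤ (i : ℕ)),
          max (r + t - ‖x i - a‖^2) 0 := by
      apply Finset.sum_congr rfl
      intro i _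
      have hd : (0:ℝ) ≤ ‖x i - a‖^2 := by positivity
      rcases le_or_gt 0 (t + r) with h | h
      · rw [max_eq_left h]
        ring_nf
      · rw [max_eq_right (le_of_lt h), max_eq_right (by linarith),
          max_eq_right (by linarith)]
    rw [hS1, hS2]
    have h2 : (m:ℝ) * r < (ν + μ) * (l:ℝ) * r := by nlinarith
    have hinv : (0:ℝ) < 1 / (2 * (l:ℝ)) := by positivity
    have h3 : (1 / (2 * (l:ℝ))) * ((m:ℝ) * r) <
        (1 / (2 * (l:ℝ))) * ((ν + μ) * (l:ℝ) * r) := by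
      exact (mul_lt_mul_iff_right₀ hinv).mpr h2
    have h4 : (1 / (2 * (l:ℝ))) * ((ν + μ) * (l:ℝ) * r) = (ν + μ) * r / 2 := by
      field_simp
    rcases le_or_gt 0 (t + r) with h | h
    · rw [max_eq_left h]
      nlinarith [h3, h4]
    · rw [max_eq_right (le_of_lt h)]
      have h5 : μ * (t + r) ≤ 0 := mul_nonpos_of_nonneg_of_nonpos hμ0 (le_of_lt h)
      nlinarith [h3, h4]
  constructor
  · intro a0 r0 t0 ht0 hmin
    have hr0 : 0 ≤ r0 := by
      by_contra hc
      push_neg at hc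
      have h1 := key a0 r0 t0 hc ht0
      have h2 := hmin a0 0 (max (t0 + r0) 0) (le_max_right _ _)
      linarith
    exact ⟨hr0, fun a r t _ ht => hmin a r t ht⟩
  · intro a0 r0 t0 hr0 ht0 hmin a r t ht
    rcases le_or_gt 0 r with hr | hr
    · exact hmin a r t hr ht
    · have h1 := key a r t hr ht
      have h2 := hmin a 0 (max (t + r) 0) le_rfl (le_max_right _ _)
      linarith
end

section
/- Suppose μ = 0 and ν ≥ m/ℓ. Then for all (a, r, t) with r ≥ 0, t ≥ 0, g(a,r,t) ≥ (1/(2ℓ))·Σ_{i=1}^m ‖x_i − â‖², where â = (1/m)Σ_{i=1}^m x_i; moreover this lower bound is attained at (â, 0, 0). -/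
open Finset

theorem stmt5
    {F : Type*} [NormedAddCommGroup F] [InnerProductSpace ℝ F]
    (l m : ℕ) (hm : 1 ≤ m) (hml : m ≤ l)
    (x : Fin l → F) (ν b : ℝ) (hν : (m : ℝ) / (l : ℝ) ≤ ν) (hb : 1 ≤ b)
    (g : F → ℝ → ℝ → ℝ)
    (hg : ∀ a r t, g a r t =
      (ν/2) * r
      + (1/(2*(l:ℝ))) * ∑ i ∈ univ.filter (fun i : Fin l => (i : ℕ) < m),
          max (‖x i - a‖^2 - r) 0
      + (b/(2*(l:ℝ))) * ∑ i ∈ univ.filter (fun i : Fin l => m ≤ (i : ℕ)),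
          max (r + t - ‖x i - a‖^2) 0)
    (aHat : F) (haHat : aHat = (m : ℝ)⁻¹ • ∑ i ∈ univ.filter (fun i : Fin l => (i : ℕ) < m), x i) :
    (∀ (a : F) (r t : ℝ), 0 ≤ r → 0 ≤ t →
      (1/(2*(l:ℝ))) * ∑ i ∈ univ.filter (fun i : Fin l => (i : ℕ) < m), ‖x i - aHat‖^2
        ≤ g a r t) ∧
    g aHat 0 0 =
      (1/(2*(l:ℝ))) * ∑ i ∈ univ.filter (fun i : Fin l => (i : ℕ) < m), ‖x i - aHat‖^2 := by
  have hl : 0 < l := lt_of_lt_of_le hm hml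
  have hl0 : (0:ℝ) < l := by exact_mod_cast hl
  have hm0 : (0:ℝ) < m := by exact_mod_cast hm
  set S := univ.filter (fun i : Fin l => (i : ℕ) < m) with hS
  have hcard : S.card = m := by
    rw [hS, Finset.card_filter]
    rw [Fin.sum_univ_eq_sum_range (fun i => if i < m then 1 else 0)]
    have : (Finset.range l).filter (fun i => i < m) = Finset.range m := by
      ext i; simp [Finset.mem_filter, Finset.mem_range]; omega
    rw [← Finset.sum_filter, this]
    simp
  have hsum0 : ∑ i ∈ S, (x i - aHat) = 0 := by
    rw [Finset.sum_sub_distrib, Finset.sum_const, hcard, haHat,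
      ← Nat.cast_smul_eq_nsmul ℝ m, smul_smul, mul_inv_cancel₀ (ne_of_gt hm0), one_smul, sub_self]
  have hkey : ∀ a : F, ∑ i ∈ S, ‖x i - aHat‖^2 ≤ ∑ i ∈ S, ‖x i - a‖^2 := by
    intro a
    have expand : ∀ i ∈ S, ‖x i - a‖^2
        = ‖x i - aHat‖^2 + 2 * inner ℝ (x i - aHat) (aHat - a) + ‖aHat - a‖^2 := by
      intro i _
      have : x i - a = (x i - aHat) + (aHat - a) := by abel
      rw [this, @norm_add_sq_real]
    rw [Finset.sum_congr rfl expand]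
    rw [Finset.sum_add_distrib, Finset.sum_add_distrib]
    have h1 : ∑ i ∈ S, 2 * inner ℝ (x i - aHat) (aHat - a) = (0:ℝ) := by
      rw [← Finset.mul_sum, ← sum_inner, hsum0, inner_zero_left, mul_zero]
    rw [h1, add_zero]
    have h2 : (0:ℝ) ≤ ∑ i ∈ S, ‖aHat - a‖^2 := Finset.sum_nonneg fun i _ => sq_nonneg _
    linarith
  constructor
  · intro a r t hr ht
    rw [hg]
    have hA : (1/(2*(l:ℝ))) * (∑ i ∈ S, (‖x i - a‖^2 - r))
        ≤ (1/(2*(l:ℝ))) * ∑ i ∈ S, max (‖x i - a‖^2 - r) 0 := by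
      apply mul_le_mul_of_nonneg_left
      · exact Finset.sum_le_sum fun i _ => le_max_left _ _
      · positivity
    have hB : (0:ℝ) ≤ (b/(2*(l:ℝ))) * ∑ i ∈ univ.filter (fun i : Fin l => m ≤ (i : ℕ)),
        max (r + t - ‖x i - a‖^2) 0 := by
      apply mul_nonneg
      · positivity
      · exact Finset.sum_nonneg fun i _ => le_max_right _ _
    have hsub : ∑ i ∈ S, (‖x i - a‖^2 - r) = (∑ i ∈ S, ‖x i - a‖^2) - m * r := by
      rw [Finset.sum_sub_distrib, Finset.sum_const, hcard, nsmul_eq_mul]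
    have hνr : 0 ≤ (ν/2) * r - (1/(2*(l:ℝ))) * (m * r) := by
      have : (m:ℝ)/(l:ℝ) * r ≤ ν * r := mul_le_mul_of_nonneg_right hν hr
      have hll : (1/(2*(l:ℝ))) * (m * r) = ((m:ℝ)/(l:ℝ) * r) / 2 := by
        rw [div_mul_eq_mul_div, one_mul, div_mul_eq_mul_div, div_div, mul_comm (l:ℝ) 2]
      rw [hll]; linarith
    have := hkey a
    have hfac : (0:ℝ) ≤ 1/(2*(l:ℝ)) := by positivity
    have hmono : (1/(2*(l:ℝ))) * ∑ i ∈ S, ‖x i - aHat‖^2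
        ≤ (1/(2*(l:ℝ))) * ∑ i ∈ S, ‖x i - a‖^2 :=
      mul_le_mul_of_nonneg_left this hfac
    rw [hsub] at hA
    have hdist : (1/(2*(l:ℝ))) * ((∑ i ∈ S, ‖x i - a‖^2) - m * r)
        = (1/(2*(l:ℝ))) * (∑ i ∈ S, ‖x i - a‖^2) - (1/(2*(l:ℝ))) * (m * r) := by ring
    rw [hdist] at hA
    linarith
  · rw [hg]
    have h1 : ∀ i ∈ S, max (‖x i - aHat‖^2 - 0) 0 = ‖x i - aHat‖^2 := by
      intro i _; rw [sub_zero]; exact max_eq_left (sq_nonneg _)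
    have h2 : ∀ i ∈ univ.filter (fun i : Fin l => m ≤ (i : ℕ)),
        max ((0:ℝ) + 0 - ‖x i - aHat‖^2) 0 = 0 := by
      intro i _
      apply max_eq_right
      have := sq_nonneg ‖x i - aHat‖
      linarith
    rw [Finset.sum_congr rfl h1, Finset.sum_congr rfl h2]
    simp
end

section
/- Suppose μ = 0 and ν ≥ m/ℓ. A point (a, r, t) with r ≥ 0, t ≥ 0 attains the infimum of g if and only if a = â, (ν − m/ℓ)·r = 0, r ≤ min_{1≤i≤m} ‖x_i − â‖², and r + t ≤ min_{m+1≤i≤ℓ} ‖x_i − â‖², where â = (1/m)Σ_{i=1}^m x_i. -/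
open Finset

set_option maxHeartbeats 1000000 in
theorem stmt6
    {F : Type*} [NormedAddCommGroup F] [InnerProductSpace ℝ F]
    (l m : ℕ) (hm : 1 ≤ m) (hml : m < l)
    (x : Fin l → F) (ν b : ℝ) (hν : (m : ℝ) / (l : ℝ) ≤ ν) (hb : 1 ≤ b)
    (g : F → ℝ → ℝ → ℝ)
    (hg : ∀ a r t, g a r t =
      (ν/2) * r
      + (1/(2*(l:ℝ))) * ∑ i ∈ univ.filter (fun i : Fin l => (i : ℕ) < m),
          max (‖x i - a‖^2 - r) 0
      + (b/(2*(l:ℝ))) * ∑ i ∈ univ.filter (fun i : Fin l => m ≤ (i : ℕ)),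
          max (r + t - ‖x i - a‖^2) 0)
    (aHat : F) (haHat : aHat = (m : ℝ)⁻¹ • ∑ i ∈ univ.filter (fun i : Fin l => (i : ℕ) < m), x i)
    (a : F) (r t : ℝ) (hr : 0 ≤ r) (ht : 0 ≤ t) :
    ((∀ (a' : F) (r' t' : ℝ), 0 ≤ r' → 0 ≤ t' → g a r t ≤ g a' r' t') ↔
      (a = aHat ∧ (ν - (m : ℝ) / (l : ℝ)) * r = 0 ∧
        (∀ i : Fin l, (i : ℕ) < m → r ≤ ‖x i - aHat‖^2) ∧
        (∀ i : Fin l, m ≤ (i : ℕ) → r + t ≤ ‖x i - aHat‖^2))) := by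
  have hm0 : (0:ℝ) < m := by exact_mod_cast hm
  have hl0 : (0:ℝ) < l := by
    have : 0 < l := lt_of_le_of_lt (Nat.zero_le m) hml
    exact_mod_cast this
  set S := univ.filter (fun i : Fin l => (i : ℕ) < m) with hS
  set T := univ.filter (fun i : Fin l => m ≤ (i : ℕ)) with hT
  have hScard : S.card = m := by
    have he : S = Finset.map (Fin.castLEEmb hml.le) univ := by
      ext i
      simp [hS, Fin.exists_iff, Fin.ext_iff]
    rw [he]; simp
  -- sum of x over S equals m • aHat
  have hsum : ∑ i ∈ S, x i = (m:ℝ) • aHat := by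
    rw [haHat, smul_smul, mul_inv_cancel₀ (ne_of_gt hm0), one_smul]
  -- key mean identity
  have hid : ∀ a : F, ∑ i ∈ S, ‖x i - a‖^2
      = ∑ i ∈ S, ‖x i - aHat‖^2 + (m:ℝ) * ‖a - aHat‖^2 := by
    intro a
    have h1 : ∀ i : Fin l, ‖x i - a‖^2
        = ‖x i - aHat‖^2 + 2 * (inner ℝ (x i - aHat) (aHat - a) : ℝ) + ‖aHat - a‖^2 := by
      intro i
      have h := norm_add_sq_real (x i - aHat) (aHat - a)
      rw [sub_add_sub_cancel] at h
      exact h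
    have h2 : ∑ i ∈ S, (inner ℝ (x i - aHat) (aHat - a) : ℝ) = 0 := by
      have : ∑ i ∈ S, (inner ℝ (x i - aHat) (aHat - a) : ℝ)
          = (inner ℝ (∑ i ∈ S, (x i - aHat)) (aHat - a) : ℝ) := by
        rw [sum_inner]
      rw [this, Finset.sum_sub_distrib, sum_const, hScard, hsum]
      have : (m:ℝ) • aHat - m • aHat = (0 : F) := by
        rw [sub_eq_zero]
        exact (Nat.cast_smul_eq_nsmul ℝ m aHat)
      rw [this, inner_zero_left]
    calc ∑ i ∈ S, ‖x i - a‖^2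
        = ∑ i ∈ S, (‖x i - aHat‖^2 + 2 * (inner ℝ (x i - aHat) (aHat - a) : ℝ) + ‖aHat - a‖^2) := by
          exact Finset.sum_congr rfl (fun i _ => h1 i)
      _ = ∑ i ∈ S, ‖x i - aHat‖^2 + 2 * ∑ i ∈ S, (inner ℝ (x i - aHat) (aHat - a) : ℝ)
            + (m:ℝ) * ‖aHat - a‖^2 := by
          rw [Finset.sum_add_distrib, Finset.sum_add_distrib, ← Finset.mul_sum, sum_const, hScard,
            nsmul_eq_mul]
      _ = ∑ i ∈ S, ‖x i - aHat‖^2 + (m:ℝ) * ‖a - aHat‖^2 := by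
          rw [h2, norm_sub_rev]; ring
  -- the decomposition of g
  have key : ∀ a r t, g a r t
      = (1/(2*(l:ℝ))) * ∑ i ∈ S, ‖x i - aHat‖^2
      + ((ν/2) * r - ((m:ℝ)/(2*(l:ℝ))) * r)
      + (1/(2*(l:ℝ))) * ∑ i ∈ S, (max (‖x i - a‖^2 - r) 0 - (‖x i - a‖^2 - r))
      + ((m:ℝ)/(2*(l:ℝ))) * ‖a - aHat‖^2
      + (b/(2*(l:ℝ))) * ∑ i ∈ T, max (r + t - ‖x i - a‖^2) 0 := by
    intro a r t
    rw [hg]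
    have h1 : ∑ i ∈ S, max (‖x i - a‖^2 - r) 0
        = ∑ i ∈ S, (max (‖x i - a‖^2 - r) 0 - (‖x i - a‖^2 - r))
          + (∑ i ∈ S, ‖x i - aHat‖^2 + (m:ℝ) * ‖a - aHat‖^2) - (m:ℝ) * r := by
      rw [Finset.sum_sub_distrib, ← hid a, Finset.sum_sub_distrib, sum_const, hScard,
        nsmul_eq_mul]
      ring
    rw [h1]
    field_simp
    ring
  set gmin := (1/(2*(l:ℝ))) * ∑ i ∈ S, ‖x i - aHat‖^2 with hgmin
  -- nonnegativity facts
  have hA : ∀ r' : ℝ, 0 ≤ r' → 0 ≤ (ν/2) * r' - ((m:ℝ)/(2*(l:ℝ))) * r' := by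
    intro r' hr'
    have h : (m:ℝ)/(2*(l:ℝ)) ≤ ν/2 := by
      have he : (m:ℝ)/(2*(l:ℝ)) = ((m:ℝ)/(l:ℝ))/2 := by ring
      rw [he]; linarith
    have := mul_le_mul_of_nonneg_right h hr'
    linarith
  have hB : ∀ (a' : F) (r' : ℝ),
      0 ≤ ∑ i ∈ S, (max (‖x i - a'‖^2 - r') 0 - (‖x i - a'‖^2 - r')) := by
    intro a' r'
    apply Finset.sum_nonneg
    intro i _
    have := le_max_left (‖x i - a'‖^2 - r') 0
    linarith
  have hD : ∀ (a' : F) (r' t' : ℝ), 0 ≤ ∑ i ∈ T, max (r' + t' - ‖x i - a'‖^2) 0 := by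
    intro a' r' t'
    apply Finset.sum_nonneg
    intro i _
    exact le_max_right _ _
  have hbl : 0 < b/(2*(l:ℝ)) := by positivity
  have hml2 : 0 < (m:ℝ)/(2*(l:ℝ)) := by positivity
  constructor
  · intro hmin
    have h0 : g a r t ≤ g aHat 0 0 := hmin aHat 0 0 le_rfl le_rfl
    have hval : g aHat 0 0 = gmin := by
      rw [key]
      have e1 : ∑ i ∈ S, (max (‖x i - aHat‖^2 - 0) 0 - (‖x i - aHat‖^2 - 0)) = 0 := by
        apply Finset.sum_eq_zero
        intro i _
        rw [sub_zero, max_eq_left (by positivity)]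
        ring
      have e2 : ∑ i ∈ T, max ((0:ℝ) + 0 - ‖x i - aHat‖^2) 0 = 0 := by
        apply Finset.sum_eq_zero
        intro i _
        rw [max_eq_right]
        nlinarith [sq_nonneg ‖x i - aHat‖]
      rw [e1, e2]
      simp
    rw [hval, key a r t] at h0
    have hA0 := hA r hr
    have hB0 := hB a r
    have hC0 : (0:ℝ) ≤ ((m:ℝ)/(2*(l:ℝ))) * ‖a - aHat‖^2 := by positivity
    have hD0 := hD a r t
    have hD0' : (0:ℝ) ≤ (b/(2*(l:ℝ))) * ∑ i ∈ T, max (r + t - ‖x i - a‖^2) 0 :=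
      mul_nonneg hbl.le (hD a r t)
    have hBl : (0:ℝ) ≤ (1/(2*(l:ℝ))) * ∑ i ∈ S, (max (‖x i - a‖^2 - r) 0 - (‖x i - a‖^2 - r)) :=
      mul_nonneg (by positivity) hB0
    -- each term is zero
    have hCz : ((m:ℝ)/(2*(l:ℝ))) * ‖a - aHat‖^2 = 0 := by linarith
    have hAz : (ν/2) * r - ((m:ℝ)/(2*(l:ℝ))) * r = 0 := by linarith
    have hBz : (1/(2*(l:ℝ))) * ∑ i ∈ S, (max (‖x i - a‖^2 - r) 0 - (‖x i - a‖^2 - r)) = 0 := by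
      linarith
    have hDz : (b/(2*(l:ℝ))) * ∑ i ∈ T, max (r + t - ‖x i - a‖^2) 0 = 0 := by linarith
    have haeq : a = aHat := by
      have : ‖a - aHat‖^2 = 0 := by
        rcases mul_eq_zero.mp hCz with h | h
        · exact absurd h (ne_of_gt hml2)
        · exact h
      have := pow_eq_zero_iff (n := 2) (by norm_num) |>.mp this
      rwa [norm_eq_zero, sub_eq_zero] at this
    refine ⟨haeq, ?_, ?_, ?_⟩
    · have : (ν - (m:ℝ)/(l:ℝ)) * r = 2 * ((ν/2) * r - ((m:ℝ)/(2*(l:ℝ))) * r) := by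
        field_simp
      rw [this, hAz, mul_zero]
    · intro i hi
      have hBsum : ∑ i ∈ S, (max (‖x i - a‖^2 - r) 0 - (‖x i - a‖^2 - r)) = 0 := by
        rcases mul_eq_zero.mp hBz with h | h
        · exact absurd h (ne_of_gt (by positivity))
        · exact h
      have hterm := (Finset.sum_eq_zero_iff_of_nonneg (fun j _ => by
        have := le_max_left (‖x j - a‖^2 - r) 0; linarith)).mp hBsum i
          (by simp [hS, hi])
      have hmax : max (‖x i - a‖^2 - r) 0 = ‖x i - a‖^2 - r := by linarith
      have h0le : 0 ≤ ‖x i - a‖^2 - r := by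
        rw [← hmax]; exact le_max_right _ _
      rw [haeq] at h0le
      linarith
    · intro i hi
      have hDsum : ∑ i ∈ T, max (r + t - ‖x i - a‖^2) 0 = 0 := by
        rcases mul_eq_zero.mp hDz with h | h
        · exact absurd h (ne_of_gt hbl)
        · exact h
      have hterm := (Finset.sum_eq_zero_iff_of_nonneg (fun j _ => le_max_right _ _)).mp hDsum i
        (by simp [hT, hi])
      have : r + t - ‖x i - a‖^2 ≤ 0 := by
        have := le_max_left (r + t - ‖x i - a‖^2) 0
        linarith
      rw [haeq] at this
      linarith
  · rintro ⟨haeq, hr0, hle1, hle2⟩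
    intro a' r' t' hr' ht'
    have hval : g a r t = gmin := by
      rw [key, haeq]
      have e1 : ∑ i ∈ S, (max (‖x i - aHat‖^2 - r) 0 - (‖x i - aHat‖^2 - r)) = 0 := by
        apply Finset.sum_eq_zero
        intro i hi
        have hi' : (i : ℕ) < m := by simpa [hS] using hi
        rw [max_eq_left (by linarith [hle1 i hi'])]
        ring
      have e2 : ∑ i ∈ T, max (r + t - ‖x i - aHat‖^2) 0 = 0 := by
        apply Finset.sum_eq_zero
        intro i hi
        have hi' : m ≤ (i : ℕ) := by simpa [hT] using hi
        rw [max_eq_right (by linarith [hle2 i hi'])]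
      have eA : (ν/2) * r - ((m:ℝ)/(2*(l:ℝ))) * r = 0 := by
        have h2 : (ν - (m:ℝ)/(l:ℝ)) * r = 2 * ((ν/2) * r - ((m:ℝ)/(2*(l:ℝ))) * r) := by
          field_simp
        rw [h2] at hr0
        linarith
      rw [e1, e2, eA]
      simp
    rw [hval, key a' r' t']
    have hA' := hA r' hr'
    have hB' : (0:ℝ) ≤ (1/(2*(l:ℝ))) * ∑ i ∈ S, (max (‖x i - a'‖^2 - r') 0 - (‖x i - a'‖^2 - r')) :=
      mul_nonneg (by positivity) (hB a' r')
    have hC' : (0:ℝ) ≤ ((m:ℝ)/(2*(l:ℝ))) * ‖a' - aHat‖^2 := by positivity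
    have hD' : (0:ℝ) ≤ (b/(2*(l:ℝ))) * ∑ i ∈ T, max (r' + t' - ‖x i - a'‖^2) 0 :=
      mul_nonneg hbl.le (hD a' r' t')
    linarith
end

section
/- Suppose 0 < μ ≤ m/ℓ and ν + μ ≥ m/ℓ. Then for every a ∈ F, r ≥ 0, and t ∈ ℝ, one has g(a, r, t) ≥ g(a, 0, r + t). -/
/-! Lowering the radius from `r` to `0` while shifting it into `t` changes each outlier term
`max (‖x_i - a‖² - r) 0` by at most `r`, so the first sum grows by at most `m r / (2ℓ)`, while the
linear part gains `(ν + μ) r / 2`; the margin terms only see `r + t` and are unchanged. -/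

open Finset

lemma sum_max_zero_le_sum_max_sub_add {ι : Type*} (s : Finset ι) (d : ι → ℝ) {r : ℝ} (hr : 0 ≤ r) :
    ∑ i ∈ s, max (d i) 0 ≤ ∑ i ∈ s, max (d i - r) 0 + #s * r := by
  calc ∑ i ∈ s, max (d i) 0 ≤ ∑ i ∈ s, (max (d i - r) 0 + r) :=
        sum_le_sum fun i _ => max_le (by linarith [le_max_left (d i - r) 0])
          (by linarith [le_max_right (d i - r) 0])
    _ = ∑ i ∈ s, max (d i - r) 0 + #s * r := by
        rw [sum_add_distrib, sum_const, nsmul_eq_mul]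

theorem stmt7_general
    {F : Type*} [NormedAddCommGroup F] [InnerProductSpace ℝ F]
    (l m : ℕ)
    (x : Fin l → F) (ν μ b : ℝ)
    (hνμ : (m : ℝ) / (l : ℝ) ≤ ν + μ)
    (g : F → ℝ → ℝ → ℝ)
    (hg : ∀ a r t, g a r t =
      (1/2) * (ν * r - μ * t)
      + (1/(2*(l:ℝ))) * ∑ i ∈ univ.filter (fun i : Fin l => (i : ℕ) < m),
          max (‖x i - a‖^2 - r) 0
      + (b/(2*(l:ℝ))) * ∑ i ∈ univ.filter (fun i : Fin l => m ≤ (i : ℕ)),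
          max (r + t - ‖x i - a‖^2) 0) :
    ∀ (a : F) (r t : ℝ), 0 ≤ r → g a 0 (r + t) ≤ g a r t := by
  intro a r t hr
  rw [hg, hg]
  simp only [mul_zero, sub_zero, zero_add]
  set s := univ.filter (fun i : Fin l => (i : ℕ) < m)
  have hsum := sum_max_zero_le_sum_max_sub_add s (fun i => ‖x i - a‖ ^ 2) hr
  have hcard : (#s : ℝ) / l ≤ ν + μ := by
    refine le_trans (div_le_div_of_nonneg_right ?_ l.cast_nonneg) hνμ
    exact_mod_cast Fin.card_filter_val_lt.trans_le (min_le_right l m)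
  have hshift : 1 / (2 * (l : ℝ)) * (#s * r) ≤ 1 / 2 * (ν + μ) * r := by
    calc 1 / (2 * (l : ℝ)) * (#s * r) = 1 / 2 * ((#s : ℝ) / l) * r := by ring
      _ ≤ 1 / 2 * (ν + μ) * r := by gcongr
  have hscale := mul_le_mul_of_nonneg_left hsum (by positivity : (0 : ℝ) ≤ 1 / (2 * l))
  linarith

theorem stmt7
    {F : Type*} [NormedAddCommGroup F] [InnerProductSpace ℝ F]
    (l m : ℕ) (hm : 1 ≤ m) (hml : m ≤ l)
    (x : Fin l → F) (ν μ b : ℝ) (hν : 0 < ν) (hb : 1 ≤ b)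
    (hμpos : 0 < μ) (hμle : μ ≤ (m : ℝ) / (l : ℝ))
    (hνμ : (m : ℝ) / (l : ℝ) ≤ ν + μ)
    (g : F → ℝ → ℝ → ℝ)
    (hg : ∀ a r t, g a r t =
      (1/2) * (ν * r - μ * t)
      + (1/(2*(l:ℝ))) * ∑ i ∈ univ.filter (fun i : Fin l => (i : ℕ) < m),
          max (‖x i - a‖^2 - r) 0
      + (b/(2*(l:ℝ))) * ∑ i ∈ univ.filter (fun i : Fin l => m ≤ (i : ℕ)),
          max (r + t - ‖x i - a‖^2) 0) :
    ∀ (a : F) (r t : ℝ), 0 ≤ r → g a 0 (r + t) ≤ g a r t :=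
  stmt7_general l m x ν μ b hνμ g hg
end

section
/- Let F̄ = span{x_1, …, x_ℓ} ⊆ F and decompose a ∈ F as a = ā + a⊥ with ā ∈ F̄ and a⊥ ⊥ F̄. Then g(a, r, t) = g(ā, r − ‖a⊥‖², t) + (ν/2)‖a⊥‖². In particular, if a⊥ ≠ 0 and ν > 0, then g(a, r, t) > g(ā, r − ‖a⊥‖², t). -/
open Finset

theorem stmt9
    {F : Type*} [NormedAddCommGroup F] [InnerProductSpace ℝ F]
    (l m : ℕ) (hm : 1 ≤ m) (hml : m ≤ l)
    (x : Fin l → F) (ν μ b : ℝ) (hν : 0 < ν) (hμ0 : 0 ≤ μ) (hb : 1 ≤ b)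
    (g : F → ℝ → ℝ → ℝ)
    (hg : ∀ a r t, g a r t =
      (1/2) * (ν * r - μ * t)
      + (1/(2*(l:ℝ))) * ∑ i ∈ univ.filter (fun i : Fin l => (i : ℕ) < m),
          max (‖x i - a‖^2 - r) 0
      + (b/(2*(l:ℝ))) * ∑ i ∈ univ.filter (fun i : Fin l => m ≤ (i : ℕ)),
          max (r + t - ‖x i - a‖^2) 0)
    (a abar aperp : F)
    (hdecomp : a = abar + aperp)
    (hbar : abar ∈ Submodule.span ℝ (Set.range x))
    (hperp : ∀ y ∈ Submodule.span ℝ (Set.range x), inner ℝ aperp y = (0 : ℝ)) :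
    (∀ r t : ℝ, g a r t = g abar (r - ‖aperp‖^2) t + (ν/2) * ‖aperp‖^2) ∧
    (aperp ≠ 0 → ∀ r t : ℝ, g abar (r - ‖aperp‖^2) t < g a r t) := by
  have key : ∀ i : Fin l, ‖x i - a‖^2 = ‖x i - abar‖^2 + ‖aperp‖^2 := by
    intro i
    have hmem : x i - abar ∈ Submodule.span ℝ (Set.range x) :=
      Submodule.sub_mem _ (Submodule.subset_span ⟨i, rfl⟩) hbar
    have hi : inner ℝ (x i - abar) aperp = (0 : ℝ) := by
      rw [real_inner_comm]; exact hperp _ hmem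
    have : x i - a = (x i - abar) - aperp := by rw [hdecomp]; abel
    rw [this, norm_sub_sq_real, hi]
    ring
  have main : ∀ r t : ℝ, g a r t = g abar (r - ‖aperp‖^2) t + (ν/2) * ‖aperp‖^2 := by
    intro r t
    rw [hg, hg]
    have h1 : ∀ i : Fin l, max (‖x i - a‖^2 - r) 0 = max (‖x i - abar‖^2 - (r - ‖aperp‖^2)) 0 := by
      intro i; rw [key i]; ring_nf
    have h2 : ∀ i : Fin l, max (r + t - ‖x i - a‖^2) 0
        = max ((r - ‖aperp‖^2) + t - ‖x i - abar‖^2) 0 := by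
      intro i; rw [key i]; ring_nf
    simp only [h1, h2]
    ring
  refine ⟨main, fun hne r t => ?_⟩
  rw [main r t]
  have h0 : 0 < ‖aperp‖ := norm_pos_iff.mpr hne
  have : 0 < ‖aperp‖^2 := by positivity
  nlinarith
end

section
/- Suppose ν + μ < m/ℓ. Any global minimizer (a, r, t) of g over {a ∈ F, r ∈ ℝ, t ≥ 0} (F a Hilbert space) has a ∈ span{x_1, …, x_ℓ}, i.e., there exist β_1,…,β_ℓ ∈ ℝ with a = Σ_i β_i x_i. -/
open Finset

theorem stmt10
    {F : Type*} [NormedAddCommGroup F] [InnerProductSpace ℝ F] [CompleteSpace F]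
    (l m : ℕ) (hm : 1 ≤ m) (hml : m ≤ l)
    (x : Fin l → F) (ν μ b : ℝ) (hν : 0 < ν) (hμ0 : 0 ≤ μ) (hb : 1 ≤ b)
    (hνμ : ν + μ < (m : ℝ) / (l : ℝ))
    (g : F → ℝ → ℝ → ℝ)
    (hg : ∀ a r t, g a r t =
      (1/2) * (ν * r - μ * t)
      + (1/(2*(l:ℝ))) * ∑ i ∈ univ.filter (fun i : Fin l => (i : ℕ) < m),
          max (‖x i - a‖^2 - r) 0
      + (b/(2*(l:ℝ))) * ∑ i ∈ univ.filter (fun i : Fin l => m ≤ (i : ℕ)),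
          max (r + t - ‖x i - a‖^2) 0)
    (a : F) (r t : ℝ) (ht : 0 ≤ t)
    (hmin : ∀ (a' : F) (r' t' : ℝ), 0 ≤ t' → g a r t ≤ g a' r' t') :
    ∃ β : Fin l → ℝ, a = ∑ i, β i • x i := by
  set K : Submodule ℝ F := Submodule.span ℝ (Set.range x) with hK
  haveI : FiniteDimensional ℝ K := FiniteDimensional.span_of_finite ℝ (Set.finite_range x)
  set p : F := (Submodule.orthogonalProjection K a : F) with hp
  have hpK : p ∈ K := (Submodule.orthogonalProjection K a).2
  have hqK : a - p ∈ Kᗮ := Submodule.sub_starProjection_mem_orthogonal (K := K) a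
  have hnorm : ∀ i : Fin l, ‖x i - a‖^2 = ‖x i - p‖^2 + ‖a - p‖^2 := by
    intro i
    have hx : x i - p ∈ K := K.sub_mem (Submodule.subset_span ⟨i, rfl⟩) hpK
    have hinner : @inner ℝ F _ (x i - p) (a - p) = 0 :=
      (Submodule.mem_orthogonal K (a - p)).mp hqK _ hx
    have hrw : x i - a = (x i - p) - (a - p) := by abel
    rw [hrw, norm_sub_sq_real, hinner]
    ring
  have key : g p (r - ‖a - p‖^2) t = g a r t - (1/2) * ν * ‖a - p‖^2 := by
    rw [hg, hg]
    have h1 : ∑ i ∈ univ.filter (fun i : Fin l => (i : ℕ) < m),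
        max (‖x i - p‖^2 - (r - ‖a - p‖^2)) 0
        = ∑ i ∈ univ.filter (fun i : Fin l => (i : ℕ) < m),
        max (‖x i - a‖^2 - r) 0 := by
      refine Finset.sum_congr rfl fun i _ => ?_
      congr 1
      rw [hnorm i]; ring
    have h2 : ∑ i ∈ univ.filter (fun i : Fin l => m ≤ (i : ℕ)),
        max ((r - ‖a - p‖^2) + t - ‖x i - p‖^2) 0
        = ∑ i ∈ univ.filter (fun i : Fin l => m ≤ (i : ℕ)),
        max (r + t - ‖x i - a‖^2) 0 := by
      refine Finset.sum_congr rfl fun i _ => ?_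
      congr 1
      rw [hnorm i]; ring
    rw [h1, h2]; ring
  have hle := hmin p (r - ‖a - p‖^2) t ht
  rw [key] at hle
  have hq2 : ‖a - p‖ ^ 2 ≤ 0 := by nlinarith [hle, hν]
  have hq0 : ‖a - p‖ = 0 := by nlinarith [sq_nonneg ‖a - p‖, norm_nonneg (a - p)]
  have hap : a = p := sub_eq_zero.mp (norm_eq_zero.mp hq0)
  have haK : a ∈ K := hap ▸ hpK
  obtain ⟨β, hβ⟩ := (Submodule.mem_span_range_iff_exists_fun ℝ).mp haK
  exact ⟨β, hβ.symm⟩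
end

section
/- Define f(a,s,t) = (ν/2)(‖a‖² − s) − (μ/2)t + (1/(2ℓ))·Σ_{i=1}^m max(‖x_i‖² − 2⟨x_i,a⟩ + s, 0) + (b/(2ℓ))·Σ_{i=m+1}^ℓ max(t − s − ‖x_i‖² + 2⟨x_i,a⟩, 0). Then f(a, ‖a‖² − r, t) = g(a, r, t) for all a, r, t, and f is a convex function of (a, s, t) on F × ℝ × ℝ. -/
open Finset

section aux

variable {E : Type*} [NormedAddCommGroup E] [InnerProductSpace ℝ E]

lemma aux_affine_convexOn {G : Type*} [AddCommMonoid G] [Module ℝ G] (f : G → ℝ)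
    (h : ∀ (x y : G) (a b : ℝ), 0 ≤ a → 0 ≤ b → a + b = 1 →
      f (a • x + b • y) = a * f x + b * f y) : ConvexOn ℝ Set.univ f :=
  ⟨convex_univ, fun x _ y _ a b ha hb hab => le_of_eq (h x y a b ha hb hab)⟩

lemma aux_sum_convexOn {G : Type*} [AddCommMonoid G] [Module ℝ G] {ι : Type*} (s : Finset ι)
    (f : ι → G → ℝ) (h : ∀ i ∈ s, ConvexOn ℝ Set.univ (f i)) :
    ConvexOn ℝ Set.univ (fun p => ∑ i ∈ s, f i p) := by
  classical
  induction s using Finset.induction_on with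
  | empty => simpa using convexOn_const 0 convex_univ
  | @insert a s hx ih =>
    simp only [Finset.sum_insert hx]
    exact ConvexOn.add (h a (Finset.mem_insert_self a s))
      (ih fun i hi => h i (Finset.mem_insert_of_mem hi))

lemma aux_max_convexOn {G : Type*} [AddCommMonoid G] [Module ℝ G] (f : G → ℝ)
    (h : ConvexOn ℝ Set.univ f) : ConvexOn ℝ Set.univ (fun p => max (f p) 0) :=
  h.sup (convexOn_const 0 convex_univ)

end aux

theorem stmt11
    {F : Type*} [NormedAddCommGroup F] [InnerProductSpace ℝ F]
    (l m : ℕ) (hm : 1 ≤ m) (hml : m ≤ l)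
    (x : Fin l → F) (ν μ b : ℝ) (hν : 0 < ν) (hμ0 : 0 ≤ μ) (hb : 1 ≤ b)
    (g : F → ℝ → ℝ → ℝ)
    (hg : ∀ a r t, g a r t =
      (1/2) * (ν * r - μ * t)
      + (1/(2*(l:ℝ))) * ∑ i ∈ univ.filter (fun i : Fin l => (i : ℕ) < m),
          max (‖x i - a‖^2 - r) 0
      + (b/(2*(l:ℝ))) * ∑ i ∈ univ.filter (fun i : Fin l => m ≤ (i : ℕ)),
          max (r + t - ‖x i - a‖^2) 0)
    (f : F → ℝ → ℝ → ℝ)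
    (hf : ∀ a s t, f a s t =
      (ν/2) * (‖a‖^2 - s) - (μ/2) * t
      + (1/(2*(l:ℝ))) * ∑ i ∈ univ.filter (fun i : Fin l => (i : ℕ) < m),
          max (‖x i‖^2 - 2 * (inner ℝ (x i) a : ℝ) + s) 0
      + (b/(2*(l:ℝ))) * ∑ i ∈ univ.filter (fun i : Fin l => m ≤ (i : ℕ)),
          max (t - s - ‖x i‖^2 + 2 * (inner ℝ (x i) a : ℝ)) 0) :
    (∀ (a : F) (r t : ℝ), f a (‖a‖^2 - r) t = g a r t) ∧
    ConvexOn ℝ Set.univ (fun p : F × ℝ × ℝ => f p.1 p.2.1 p.2.2) := by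
  constructor
  · intro a r t
    rw [hf, hg]
    have key : ∀ i : Fin l, ‖x i - a‖^2 = ‖x i‖^2 - 2 * (inner ℝ (x i) a : ℝ) + ‖a‖^2 := by
      intro i; rw [@norm_sub_sq_real]
    have e1 : (∑ i ∈ univ.filter (fun i : Fin l => (i : ℕ) < m),
        max (‖x i‖^2 - 2 * (inner ℝ (x i) a : ℝ) + (‖a‖^2 - r)) 0)
        = ∑ i ∈ univ.filter (fun i : Fin l => (i : ℕ) < m),
        max (‖x i - a‖^2 - r) 0 :=
      Finset.sum_congr rfl fun i _ => by rw [key i]; ring_nf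
    have e2 : (∑ i ∈ univ.filter (fun i : Fin l => m ≤ (i : ℕ)),
        max (t - (‖a‖^2 - r) - ‖x i‖^2 + 2 * (inner ℝ (x i) a : ℝ)) 0)
        = ∑ i ∈ univ.filter (fun i : Fin l => m ≤ (i : ℕ)),
        max (r + t - ‖x i - a‖^2) 0 :=
      Finset.sum_congr rfl fun i _ => by rw [key i]; ring_nf
    rw [e1, e2]; ring
  · -- convexity
    have hconv : ConvexOn ℝ Set.univ (fun p : F × ℝ × ℝ =>
      (ν/2) * (‖p.1‖^2 - p.2.1) - (μ/2) * p.2.2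
      + (1/(2*(l:ℝ))) * ∑ i ∈ univ.filter (fun i : Fin l => (i : ℕ) < m),
          max (‖x i‖^2 - 2 * (inner ℝ (x i) p.1 : ℝ) + p.2.1) 0
      + (b/(2*(l:ℝ))) * ∑ i ∈ univ.filter (fun i : Fin l => m ≤ (i : ℕ)),
          max (p.2.2 - p.2.1 - ‖x i‖^2 + 2 * (inner ℝ (x i) p.1 : ℝ)) 0) := by
      have hnorm : ConvexOn ℝ Set.univ (fun p : F × ℝ × ℝ => ‖p.1‖^2) := by
        have h1 : ConvexOn ℝ Set.univ (fun a : F => ‖a‖^2) := by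
          refine ⟨convex_univ, fun p _ q _ a c ha hc hac => ?_⟩
          have expand : ‖a • p + c • q‖^2
              = a^2*‖p‖^2 + 2*(a*c)*(inner ℝ p q : ℝ) + c^2*‖q‖^2 := by
            rw [← real_inner_self_eq_norm_sq, inner_add_add_self]
            simp only [inner_smul_left, inner_smul_right, conj_trivial,
              real_inner_self_eq_norm_sq]
            rw [real_inner_comm q p]; ring
          have hsub : ‖p - q‖^2 = ‖p‖^2 - 2*(inner ℝ p q : ℝ) + ‖q‖^2 := by
            rw [@norm_sub_sq_real]
          have hnn : (0:ℝ) ≤ ‖p - q‖^2 := by positivity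
          simp only [smul_eq_mul, expand]
          nlinarith [mul_nonneg ha hc]
        have := h1.comp_linearMap (LinearMap.fst ℝ F (ℝ × ℝ))
        exact this
      have hA : ConvexOn ℝ Set.univ (fun p : F × ℝ × ℝ =>
          (ν/2) * (‖p.1‖^2 - p.2.1) - (μ/2) * p.2.2) := by
        have h2 : ConvexOn ℝ Set.univ (fun p : F × ℝ × ℝ =>
            (ν/2) * ‖p.1‖^2) := hnorm.smul (by positivity)
        have h3 : ConvexOn ℝ Set.univ (fun p : F × ℝ × ℝ =>
            - (ν/2) * p.2.1 - (μ/2) * p.2.2) := by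
          apply aux_affine_convexOn
          intro p q a c ha hc hac
          simp only [Prod.smul_fst, Prod.smul_snd, Prod.fst_add, Prod.snd_add,
            smul_eq_mul, Prod.fst_add, Prod.snd_add]
          ring
        have := h2.add h3
        convert this using 1
        ext p; simp only [Pi.add_apply]; ring
        ext p; simp only [Pi.add_apply]; ring
      have hsum1 : ConvexOn ℝ Set.univ (fun p : F × ℝ × ℝ =>
          ∑ i ∈ univ.filter (fun i : Fin l => (i : ℕ) < m),
            max (‖x i‖^2 - 2 * (inner ℝ (x i) p.1 : ℝ) + p.2.1) 0) := by
        apply aux_sum_convexOn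
        intro i _
        apply aux_max_convexOn
        apply aux_affine_convexOn
        intro p q a c ha hc hac
        simp only [Prod.smul_fst, Prod.smul_snd, Prod.fst_add, Prod.snd_add,
          inner_add_right, inner_smul_right, smul_eq_mul]
        ring_nf
        nlinarith [hac]
      have hsum2 : ConvexOn ℝ Set.univ (fun p : F × ℝ × ℝ =>
          ∑ i ∈ univ.filter (fun i : Fin l => m ≤ (i : ℕ)),
            max (p.2.2 - p.2.1 - ‖x i‖^2 + 2 * (inner ℝ (x i) p.1 : ℝ)) 0) := by
        apply aux_sum_convexOn
        intro i _
        apply aux_max_convexOn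
        apply aux_affine_convexOn
        intro p q a c ha hc hac
        simp only [Prod.smul_fst, Prod.smul_snd, Prod.fst_add, Prod.snd_add,
          inner_add_right, inner_smul_right, smul_eq_mul]
        ring_nf
        nlinarith [hac]
      have hS1 := hsum1.smul (show (0:ℝ) ≤ 1/(2*(l:ℝ)) by positivity)
      have hS2 := hsum2.smul (show (0:ℝ) ≤ b/(2*(l:ℝ)) by positivity)
      exact (hA.add hS1).add hS2
    have heq : (fun p : F × ℝ × ℝ => f p.1 p.2.1 p.2.2)
        = (fun p : F × ℝ × ℝ =>
      (ν/2) * (‖p.1‖^2 - p.2.1) - (μ/2) * p.2.2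
      + (1/(2*(l:ℝ))) * ∑ i ∈ univ.filter (fun i : Fin l => (i : ℕ) < m),
          max (‖x i‖^2 - 2 * (inner ℝ (x i) p.1 : ℝ) + p.2.1) 0
      + (b/(2*(l:ℝ))) * ∑ i ∈ univ.filter (fun i : Fin l => m ≤ (i : ℕ)),
          max (p.2.2 - p.2.1 - ‖x i‖^2 + 2 * (inner ℝ (x i) p.1 : ℝ)) 0) :=
      funext fun p => hf p.1 p.2.1 p.2.2
    rw [heq]; exact hconv
end

section
/- Suppose μ = 0 and m < ℓ. Conversely, if (a*, R*) is a global minimizer of (a,R) ↦ ĝ(a,R,0), then (a*, R*, 0) is a global minimizer of ĝ over all (a, R, ρ). -/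
open Finset

theorem stmt14_general
    {F : Type*} [NormedAddCommGroup F]
    (l m : ℕ)
    (x : Fin l → F) (ν C D : ℝ) (hν : 0 < ν) (hD : 0 < D)
    (gHat : F → ℝ → ℝ → ℝ)
    (hgHat : ∀ a R ρ, gHat a R ρ =
      (ν/2) * (R^2
        + C * ∑ i ∈ univ.filter (fun i : Fin l => (i : ℕ) < m),
            max (‖x i - a‖^2 - R^2) 0
        + D * ∑ i ∈ univ.filter (fun i : Fin l => m ≤ (i : ℕ)),
            max (R^2 + ρ^2 - ‖x i - a‖^2) 0))
    (aStar : F) (RStar : ℝ)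
    (hmin : ∀ (a : F) (R : ℝ), gHat aStar RStar 0 ≤ gHat a R 0) :
    ∀ (a : F) (R ρ : ℝ), gHat aStar RStar 0 ≤ gHat a R ρ := by
  intro a R ρ
  calc gHat aStar RStar 0 ≤ gHat a R 0 := hmin a R
    _ ≤ gHat a R ρ := by
      rw [hgHat, hgHat]
      gcongr _ * (_ + _ + _ * ∑ _ ∈ _, max (_ + ?_ - _) _)
      simpa using sq_nonneg ρ

theorem stmt14
    {F : Type*} [NormedAddCommGroup F] [InnerProductSpace ℝ F]
    (l m : ℕ) (hm : 1 ≤ m) (hml : m < l)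
    (x : Fin l → F) (ν C D : ℝ) (hν : 0 < ν) (hC : 0 < C) (hD : 0 < D)
    (gHat : F → ℝ → ℝ → ℝ)
    (hgHat : ∀ a R ρ, gHat a R ρ =
      (ν/2) * (R^2
        + C * ∑ i ∈ univ.filter (fun i : Fin l => (i : ℕ) < m),
            max (‖x i - a‖^2 - R^2) 0
        + D * ∑ i ∈ univ.filter (fun i : Fin l => m ≤ (i : ℕ)),
            max (R^2 + ρ^2 - ‖x i - a‖^2) 0))
    (aStar : F) (RStar : ℝ)
    (hmin : ∀ (a : F) (R : ℝ), gHat aStar RStar 0 ≤ gHat a R 0) :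
    ∀ (a : F) (R ρ : ℝ), gHat aStar RStar 0 ≤ gHat a R ρ :=
  stmt14_general l m x ν C D hν hD gHat hgHat aStar RStar hmin
end

section
/- Suppose α ∈ ℝ^ℓ satisfies 0 ≤ α_i ≤ 1 for i ∈ [1,m], 0 ≤ α_i ≤ b for i ∈ [m+1,ℓ], Σ_{i=1}^m α_i − Σ_{i=m+1}^ℓ α_i = ℓν, and Σ_{i=m+1}^ℓ α_i ≥ ℓμ. With m₊ = #{i ∈ [1,m] : α_i = 1}, s₊ = #{i ∈ [1,m] : α_i > 0}, n₊ = #{i ∈ [m+1,ℓ] : α_i = b}, s₋ = #{i ∈ [m+1,ℓ] : α_i > 0}, it holds that m₊/ℓ ≤ ν + b·s₋/ℓ, ν + b·n₊/ℓ ≤ s₊/ℓ, and μ/b ≤ s₋/ℓ. -/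
open Finset

/-!
On each block, a positive coordinate contributes at most its upper bound to the block sum and a
coordinate at its upper bound contributes exactly that bound. So `m₊ ≤ Σ₊ ≤ s₊` and
`b n₊ ≤ Σ₋ ≤ b s₋` for the block sums `Σ₊`, `Σ₋`, and the three inequalities follow from
`Σ₊ = ℓν + Σ₋` and `ℓμ ≤ Σ₋`.
-/

section BoundedSum

variable {ι : Type*} {s : Finset ι} {f : ι → ℝ} {c : ℝ}

theorem sum_le_mul_card_filter_pos (hf : ∀ i ∈ s, 0 ≤ f i ∧ f i ≤ c) :
    ∑ i ∈ s, f i ≤ c * #(s.filter (0 < f ·)) := by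
  rw [← sum_filter_of_ne fun i hi hne => lt_of_le_of_ne (hf i hi).1 hne.symm, mul_comm,
    ← nsmul_eq_mul]
  exact sum_le_card_nsmul _ _ _ fun i hi => (hf i (mem_filter.1 hi).1).2

theorem mul_card_filter_eq_le_sum (hf : ∀ i ∈ s, 0 ≤ f i) :
    c * #(s.filter (f · = c)) ≤ ∑ i ∈ s, f i :=
  calc c * #(s.filter (f · = c)) = ∑ i ∈ s.filter (f · = c), f i := by
        rw [sum_congr rfl fun i hi => (mem_filter.1 hi).2, sum_const, nsmul_eq_mul, mul_comm]
    _ ≤ ∑ i ∈ s, f i := sum_le_sum_of_subset_of_nonneg (filter_subset _ _) fun i hi _ => hf i hi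

end BoundedSum

theorem stmt17_general
    (l m : ℕ) (hml : m < l)
    (ν μ b : ℝ) (hb : 1 ≤ b)
    (α : Fin l → ℝ)
    (hpos : ∀ i : Fin l, (i : ℕ) < m → 0 ≤ α i ∧ α i ≤ 1)
    (hneg : ∀ i : Fin l, m ≤ (i : ℕ) → 0 ≤ α i ∧ α i ≤ b)
    (hsum : (∑ i ∈ univ.filter (fun i : Fin l => (i : ℕ) < m), α i)
          - (∑ i ∈ univ.filter (fun i : Fin l => m ≤ (i : ℕ)), α i) = (l : ℝ) * ν)
    (hsumneg : (l : ℝ) * μ ≤ ∑ i ∈ univ.filter (fun i : Fin l => m ≤ (i : ℕ)), α i) :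
    ((univ.filter (fun i : Fin l => (i : ℕ) < m ∧ α i = 1)).card : ℝ) / (l : ℝ)
      ≤ ν + b * ((univ.filter (fun i : Fin l => m ≤ (i : ℕ) ∧ 0 < α i)).card : ℝ) / (l : ℝ) ∧
    ν + b * ((univ.filter (fun i : Fin l => m ≤ (i : ℕ) ∧ α i = b)).card : ℝ) / (l : ℝ)
      ≤ ((univ.filter (fun i : Fin l => (i : ℕ) < m ∧ 0 < α i)).card : ℝ) / (l : ℝ) ∧
    μ / b ≤ ((univ.filter (fun i : Fin l => m ≤ (i : ℕ) ∧ 0 < α i)).card : ℝ) / (l : ℝ) := by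
  have hl : (0 : ℝ) < l := by exact_mod_cast (Nat.zero_le m).trans_lt hml
  have hpos' : ∀ i ∈ univ.filter (fun i : Fin l => (i : ℕ) < m), 0 ≤ α i ∧ α i ≤ 1 :=
    fun i hi => hpos i (mem_filter.1 hi).2
  have hneg' : ∀ i ∈ univ.filter (fun i : Fin l => m ≤ (i : ℕ)), 0 ≤ α i ∧ α i ≤ b :=
    fun i hi => hneg i (mem_filter.1 hi).2
  have hmp := mul_card_filter_eq_le_sum (c := 1) fun i hi => (hpos' i hi).1
  have hsp := sum_le_mul_card_filter_pos hpos'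
  have hnp := mul_card_filter_eq_le_sum (c := b) fun i hi => (hneg' i hi).1
  have hsn := sum_le_mul_card_filter_pos hneg'
  simp only [filter_filter, one_mul] at hmp hsp hnp hsn
  refine ⟨?_, ?_, ?_⟩
  · rw [div_le_iff₀ hl, add_mul, div_mul_cancel₀ _ hl.ne']
    linarith
  · rw [le_div_iff₀ hl, add_mul, div_mul_cancel₀ _ hl.ne']
    linarith
  · rw [div_le_div_iff₀ (by linarith) hl]
    linarith

theorem stmt17
    (l m : ℕ) (hm : 1 ≤ m) (hml : m < l)
    (ν μ b : ℝ) (hν : 0 < ν) (hμ0 : 0 ≤ μ) (hb : 1 ≤ b)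
    (α : Fin l → ℝ)
    (hpos : ∀ i : Fin l, (i : ℕ) < m → 0 ≤ α i ∧ α i ≤ 1)
    (hneg : ∀ i : Fin l, m ≤ (i : ℕ) → 0 ≤ α i ∧ α i ≤ b)
    (hsum : (∑ i ∈ univ.filter (fun i : Fin l => (i : ℕ) < m), α i)
          - (∑ i ∈ univ.filter (fun i : Fin l => m ≤ (i : ℕ)), α i) = (l : ℝ) * ν)
    (hsumneg : (l : ℝ) * μ ≤ ∑ i ∈ univ.filter (fun i : Fin l => m ≤ (i : ℕ)), α i) :
    ((univ.filter (fun i : Fin l => (i : ℕ) < m ∧ α i = 1)).card : ℝ) / (l : ℝ)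
      ≤ ν + b * ((univ.filter (fun i : Fin l => m ≤ (i : ℕ) ∧ 0 < α i)).card : ℝ) / (l : ℝ) ∧
    ν + b * ((univ.filter (fun i : Fin l => m ≤ (i : ℕ) ∧ α i = b)).card : ℝ) / (l : ℝ)
      ≤ ((univ.filter (fun i : Fin l => (i : ℕ) < m ∧ 0 < α i)).card : ℝ) / (l : ℝ) ∧
    μ / b ≤ ((univ.filter (fun i : Fin l => m ≤ (i : ℕ) ∧ 0 < α i)).card : ℝ) / (l : ℝ) :=
  stmt17_general l m hml ν μ b hb α hpos hneg hsum hsumneg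
end
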